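/- arXiv:1708.01905 — 3 statements merged into one kernel-verified Lean document; each statement's English description precedes it below -/
import Mathlib

section
/- If A is a set of positive integers with upper Banach density δ(A) = 1, then A contains an infinite sequence (B_i)_{i=1}^∞ of pairwise disjoint subsets such that δ(B_i) = 1 for every i ∈ ℕ and, for every nonempty finite set I of positive integers, the sumset ∑_{i∈I} B_i = { ∑_{i∈I} a_i : a_i ∈ B_i for each i ∈ I } is contained in A. -/
open Filter Set

/-- `bF A n = max_{u ∈ ℕ₀} |A ∩ [u, u+n-1]|`. -/
noncomputable def bF (A : Set ℕ) (n : ℕ) : ℕ :=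
  ⨆ u : ℕ, (A ∩ Set.Icc u (u + n - 1)).ncard

/-- Upper Banach density `δ(A) = limsup_{n→∞} bF A n / n`. -/
noncomputable def ubd (A : Set ℕ) : ℝ :=
  Filter.limsup (fun n : ℕ => (bF A n : ℝ) / n) Filter.atTop

/-- The sumset `∑_{i ∈ I} B i = { ∑_{i∈I} a i : a i ∈ B i for each i ∈ I }`. -/
def sumset (B : ℕ → Set ℕ) (I : Finset ℕ) : Set ℕ :=
  {s : ℕ | ∃ a : ℕ → ℕ, (∀ i ∈ I, a i ∈ B i) ∧ s = ∑ i ∈ I, a i}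

/-!
If `A` contained no interval of length `L + 1`, every window of length `n ≥ L + 1` would miss at
least `⌊n / (L + 1)⌋ ≥ n / (2 (L + 1))` points of `A`, so `δ(A) ≤ 1 - 1 / (2 (L + 1))`. Hence
`δ(A) = 1` gives arbitrarily long intervals in `A`. From them we pick blocks
`J n = [v n, v n + n] ⊆ A` with `v n > S n := ∑_{m<n} (v m + m)` and `[v n, v n + n + S n] ⊆ A`.
A sum of elements of distinct blocks with largest index `n` then lies in `[v n, v n + n + S n]`,
hence in `A`. Finally the sets `B i = ⋃ j, J (Nat.pair i j)` are disjoint, contain arbitrarily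
long intervals (so have density `1`), and inherit the sumset property from the blocks.
-/

lemma Icc_add_sub_one_eq_Ico {n : ℕ} (hn : 1 ≤ n) (u : ℕ) : Icc u (u + n - 1) = Ico u (u + n) := by
  rw [← Ico_add_one_right_eq_Icc, Nat.sub_add_cancel (by omega)]

lemma ncard_inter_Ico_le (A : Set ℕ) (u n : ℕ) : (A ∩ Ico u (u + n)).ncard ≤ n :=
  (ncard_le_ncard inter_subset_right (finite_Ico _ _)).trans (by simp)

lemma bF_eq_iSup_Ico {n : ℕ} (hn : 1 ≤ n) (A : Set ℕ) :
    bF A n = ⨆ u, (A ∩ Ico u (u + n)).ncard := by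
  simp only [bF, Icc_add_sub_one_eq_Ico hn]

lemma bF_le {n : ℕ} (hn : 1 ≤ n) (A : Set ℕ) : bF A n ≤ n := by
  rw [bF_eq_iSup_Ico hn]
  exact ciSup_le' fun u => ncard_inter_Ico_le A u n

lemma bF_eq_self_of_Ico_subset {A : Set ℕ} {n v : ℕ} (hn : 1 ≤ n) (h : Ico v (v + n) ⊆ A) :
    bF A n = n := by
  refine (bF_le hn A).antisymm ?_
  rw [bF_eq_iSup_Ico hn]
  refine le_ciSup_of_le ⟨n, ?_⟩ v ?_
  · rintro _ ⟨u, rfl⟩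
    exact ncard_inter_Ico_le A u n
  · simp [inter_eq_right.2 h]

lemma ubd_eq_one_of_forall_Ico_subset {A : Set ℕ} (h : ∀ n, ∃ v, Ico v (v + n) ⊆ A) :
    ubd A = 1 := by
  have hconst : ∀ᶠ n : ℕ in atTop, (bF A n : ℝ) / n = 1 := by
    filter_upwards [eventually_ge_atTop 1] with n hn
    obtain ⟨v, hv⟩ := h n
    rw [bF_eq_self_of_Ico_subset hn hv, div_self (by positivity)]
  rw [ubd, limsup_congr hconst, limsup_const]

lemma ubd_le_of_eventually_le {A : Set ℕ} {c : ℝ} (h : ∀ᶠ n in atTop, (bF A n : ℝ) ≤ c * n) :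
    ubd A ≤ c := by
  refine limsup_le_of_le (IsBoundedUnder.isCoboundedUnder_le ⟨0, ?_⟩) ?_
  · exact eventually_map.2 (Eventually.of_forall fun n => by positivity)
  · filter_upwards [h, eventually_ge_atTop 1] with n hle hn
    rwa [div_le_iff₀ (by positivity)]

lemma ncard_inter_Ico_add_le_of_gaps {A : Set ℕ} {L : ℕ} (hgap : ∀ u, ¬ Icc u (u + L) ⊆ A)
    (k u n : ℕ) (hn : k * (L + 1) ≤ n) : (A ∩ Ico u (u + n)).ncard + k ≤ n := by
  induction k generalizing u n with
  | zero => exact ncard_inter_Ico_le A u n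
  | succ k ih =>
    have hfirst : (A ∩ Ico u (u + (L + 1))).ncard ≤ L := by
      have hlt : A ∩ Ico u (u + (L + 1)) ⊂ Ico u (u + (L + 1)) := by
        refine inter_subset_right.ssubset_of_not_subset fun h => hgap u ?_
        rw [← Ico_add_one_right_eq_Icc]
        exact h.trans inter_subset_left
      have := ncard_lt_ncard hlt (finite_Ico _ _)
      simp only [ncard_Ico_nat] at this
      omega
    obtain ⟨m, rfl⟩ : ∃ m, n = (L + 1) + m := ⟨n - (L + 1), by rw [add_mul] at hn; omega⟩
    have hrest := ih (u + (L + 1)) m (by rw [add_mul] at hn; omega)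
    have hsplit : A ∩ Ico u (u + (L + 1 + m)) =
        A ∩ Ico u (u + (L + 1)) ∪ A ∩ Ico (u + (L + 1)) (u + (L + 1) + m) := by
      rw [← inter_union_distrib_left, Ico_union_Ico_eq_Ico (by omega) (by omega), add_assoc u]
    have := ncard_union_le (A ∩ Ico u (u + (L + 1))) (A ∩ Ico (u + (L + 1)) (u + (L + 1) + m))
    rw [hsplit]
    omega

lemma bF_add_div_le_of_gaps {A : Set ℕ} {L n : ℕ} (hgap : ∀ u, ¬ Icc u (u + L) ⊆ A)
    (hn : 1 ≤ n) : bF A n + n / (L + 1) ≤ n := by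
  have h : bF A n ≤ n - n / (L + 1) := by
    rw [bF_eq_iSup_Ico hn]
    refine ciSup_le' fun u => ?_
    have := ncard_inter_Ico_add_le_of_gaps hgap (n / (L + 1)) u n (Nat.div_mul_le_self n (L + 1))
    omega
  have := Nat.div_le_self n (L + 1)
  omega

lemma exists_Icc_subset_of_ubd_eq_one {A : Set ℕ} (hA : ubd A = 1) (L : ℕ) :
    ∃ u, Icc u (u + L) ⊆ A := by
  by_contra! hgap
  have hle : ubd A ≤ 1 - 1 / (2 * (L + 1)) := by
    refine ubd_le_of_eventually_le ?_
    filter_upwards [eventually_ge_atTop (L + 1)] with n hn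
    have hbF := bF_add_div_le_of_gaps hgap (n := n) (by omega)
    have hblocks : n ≤ 2 * (L + 1) * (n / (L + 1)) := by
      have := Nat.lt_mul_div_succ n (Nat.succ_pos L)
      have := Nat.div_pos hn (Nat.succ_pos L)
      nlinarith
    have hbF' : (bF A n : ℝ) + (n / (L + 1) : ℕ) ≤ n := by exact_mod_cast hbF
    have hblocks' : (n : ℝ) ≤ 2 * (L + 1) * (n / (L + 1) : ℕ) := by exact_mod_cast hblocks
    have hL : (0 : ℝ) < 2 * (L + 1) := by positivity
    calc (bF A n : ℝ) ≤ n - n / (2 * (L + 1)) := by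
          have : (n : ℝ) / (2 * (L + 1)) ≤ (n / (L + 1) : ℕ) := by
            rw [div_le_iff₀ hL]; linarith
          linarith
      _ = (1 - 1 / (2 * (L + 1))) * n := by ring
  have : (0 : ℝ) < 1 / (2 * (L + 1)) := by positivity
  linarith

lemma subset_sumset_singleton (B : ℕ → Set ℕ) (i : ℕ) : B i ⊆ sumset B {i} :=
  fun x hx => ⟨fun _ => x, by simpa using hx, by simp⟩

lemma sumset_iUnion_pair_subset {A : Set ℕ} {J : ℕ → Set ℕ}
    (hJ : ∀ F : Finset ℕ, F.Nonempty → sumset J F ⊆ A) (I : Finset ℕ) (hI : I.Nonempty) :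
    sumset (fun i => ⋃ j, J (Nat.pair i j)) I ⊆ A := by
  rintro _ ⟨a, ha, rfl⟩
  have hj : ∀ i, ∃ j, i ∈ I → a i ∈ J (Nat.pair i j) := fun i => by
    by_cases hi : i ∈ I
    · obtain ⟨j, hj⟩ := mem_iUnion.1 (ha i hi)
      exact ⟨j, fun _ => hj⟩
    · exact ⟨0, fun h => absurd h hi⟩
  choose j hj using hj
  have hinj : Set.InjOn (fun i => Nat.pair i (j i)) I :=
    fun x _ y _ h => (Nat.pair_eq_pair.1 h).1
  refine hJ (I.image fun i => Nat.pair i (j i)) (hI.image _) ⟨fun m => a (Nat.unpair m).1, ?_, ?_⟩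
  · simp only [Finset.forall_mem_image, Nat.unpair_pair]
    exact hj
  · rw [Finset.sum_image hinj]
    simp only [Nat.unpair_pair]

lemma Pairwise.disjoint_iUnion_pair {J : ℕ → Set ℕ} (hJ : Pairwise (Function.onFun Disjoint J)) :
    Pairwise (Function.onFun Disjoint fun i => ⋃ j, J (Nat.pair i j)) := by
  intro i i' hii'
  simp only [Function.onFun, disjoint_iUnion_left, disjoint_iUnion_right]
  exact fun j j' => hJ fun h => hii' (Nat.pair_eq_pair.1 h).1

section Blocks

variable (g : ℕ → ℕ)

/-- `blockSum g n = ∑_{m<n} (blockStart g m + m)` bounds every sum of elements taken from distinct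
earlier blocks. Block `n` starts just past `blockSum g n` inside `[g L, g L + L]`, where
`L = 2 * blockSum g n + n + 1` leaves room to add that sum. -/
def blockSum : ℕ → ℕ
  | 0 => 0
  | n + 1 => blockSum n + (g (2 * blockSum n + n + 1) + blockSum n + 1) + n

def blockStart (n : ℕ) : ℕ := g (2 * blockSum g n + n + 1) + blockSum g n + 1

def block (n : ℕ) : Set ℕ := Icc (blockStart g n) (blockStart g n + n)

lemma blockSum_eq_sum (n : ℕ) : blockSum g n = ∑ m ∈ Finset.range n, (blockStart g m + m) := by
  induction n with
  | zero => rfl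
  | succ n ih =>
    rw [Finset.sum_range_succ, ← ih, blockSum, blockStart]
    ring

lemma blockStart_add_lt {m n : ℕ} (h : m < n) : blockStart g m + m < blockStart g n := by
  have hle : blockStart g m + m ≤ blockSum g n := by
    rw [blockSum_eq_sum]
    exact Finset.single_le_sum (f := fun m => blockStart g m + m) (fun _ _ => Nat.zero_le _)
      (Finset.mem_range.2 h)
  have : blockSum g n < blockStart g n := by rw [blockStart]; omega
  omega

lemma pairwise_disjoint_block : Pairwise (Function.onFun Disjoint (block g)) := by
  intro m n hmn
  rw [Function.onFun, disjoint_left]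
  rintro x ⟨hm₁, hm₂⟩ ⟨hn₁, hn₂⟩
  rcases hmn.lt_or_gt with h | h
  · have := blockStart_add_lt g h; omega
  · have := blockStart_add_lt g h; omega

lemma sumset_block_subset {A : Set ℕ} (hg : ∀ L, Icc (g L) (g L + L) ⊆ A)
    (F : Finset ℕ) (hF : F.Nonempty) : sumset (block g) F ⊆ A := by
  rintro _ ⟨b, hb, rfl⟩
  set n := F.max' hF
  have hnF : n ∈ F := F.max'_mem hF
  have hrest : ∑ m ∈ F.erase n, b m ≤ blockSum g n := by
    calc ∑ m ∈ F.erase n, b m ≤ ∑ m ∈ F.erase n, (blockStart g m + m) :=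
          Finset.sum_le_sum fun m hm => (hb m (Finset.mem_of_mem_erase hm)).2
      _ ≤ ∑ m ∈ Finset.range n, (blockStart g m + m) := by
          refine Finset.sum_le_sum_of_subset fun m hm => Finset.mem_range.2 ?_
          exact lt_of_le_of_ne (F.le_max' m (Finset.mem_of_mem_erase hm))
            (Finset.ne_of_mem_erase hm)
      _ = blockSum g n := (blockSum_eq_sum g n).symm
  rw [← Finset.add_sum_erase F b hnF]
  have hbn := hb n hnF
  simp only [block, blockStart, mem_Icc] at hbn
  apply hg (2 * blockSum g n + n + 1)
  simp only [mem_Icc]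
  omega

end Blocks

theorem erdos_sumset_density_one_general (A : Set ℕ) (hA : ubd A = 1) :
    ∃ B : ℕ → Set ℕ,
      (∀ i, B i ⊆ A) ∧
      Pairwise (Function.onFun Disjoint B) ∧
      (∀ i, ubd (B i) = 1) ∧
      (∀ I : Finset ℕ, I.Nonempty → sumset B I ⊆ A) := by
  choose g hg using exists_Icc_subset_of_ubd_eq_one hA
  have hsumset := sumset_iUnion_pair_subset (sumset_block_subset g hg)
  refine ⟨fun i => ⋃ j, block g (Nat.pair i j), fun i => ?_,
    (pairwise_disjoint_block g).disjoint_iUnion_pair, fun i => ?_, hsumset⟩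
  · exact (subset_sumset_singleton _ i).trans (hsumset {i} (Finset.singleton_nonempty i))
  · refine ubd_eq_one_of_forall_Ico_subset fun n => ⟨blockStart g (Nat.pair i n), ?_⟩
    refine Subset.trans ?_ (subset_iUnion _ n)
    have := Nat.right_le_pair i n
    exact Ico_subset_Icc_self.trans (Icc_subset_Icc_right (by omega))

theorem erdos_sumset_density_one (A : Set ℕ) (hApos : ∀ a ∈ A, 0 < a)
    (hA : ubd A = 1) :
    ∃ B : ℕ → Set ℕ,
      (∀ i, B i ⊆ A) ∧
      Pairwise (Function.onFun Disjoint B) ∧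
      (∀ i, ubd (B i) = 1) ∧
      (∀ I : Finset ℕ, I.Nonempty → sumset B I ⊆ A) :=
  erdos_sumset_density_one_general A hA
end

section
/- Let A = ⋃_{i=1}^∞ [4^i, 4^i + i − 1]. Then the upper Banach density of A equals 1, yet for every infinite subset B of A and every integer t, the set 2B = {2b : b ∈ B} is not contained in A + t = {a + t : a ∈ A}. -/
open Filter Set

/-!
Every length `n` occurs among the blocks `[4^i, 4^i + i - 1]`, so `A` contains arbitrarily long
intervals and has upper Banach density `1`. On the other hand, if `b` lies in the block of index
`i > |t|`, then `2b - t` falls strictly between the end `4^i + i - 1` of that block and the start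
`4^(i+1)` of the next one, so it is not in `A`; an infinite `B ⊆ A` contains such a `b`.
-/

lemma ncard_Icc_add_sub_one (u : ℕ) {n : ℕ} (hn : 1 ≤ n) : (Icc u (u + n - 1)).ncard = n := by
  rw [ncard_eq_toFinset_card', toFinset_Icc, Nat.card_Icc]
  omega

lemma ncard_inter_Icc_le (A : Set ℕ) (u : ℕ) {n : ℕ} (hn : 1 ≤ n) :
    (A ∩ Icc u (u + n - 1)).ncard ≤ n :=
  (ncard_le_ncard inter_subset_right (finite_Icc _ _)).trans (ncard_Icc_add_sub_one u hn).le

lemma bF_eq_self_of_Icc_subset {A : Set ℕ} {n u : ℕ} (hn : 1 ≤ n)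
    (h : Icc u (u + n - 1) ⊆ A) : bF A n = n := by
  refine le_antisymm (ciSup_le fun v => ncard_inter_Icc_le A v hn) ?_
  have hbdd : BddAbove (range fun v => (A ∩ Icc v (v + n - 1)).ncard) := by
    refine ⟨n, ?_⟩
    rintro _ ⟨v, rfl⟩
    exact ncard_inter_Icc_le A v hn
  calc n = (A ∩ Icc u (u + n - 1)).ncard := by
        rw [inter_eq_self_of_subset_right h, ncard_Icc_add_sub_one u hn]
    _ ≤ bF A n := le_ciSup hbdd u

lemma ubd_eq_one_of_forall_Icc_subset {A : Set ℕ}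
    (h : ∀ n ≥ 1, ∃ u, Icc u (u + n - 1) ⊆ A) : ubd A = 1 := by
  have hratio : ∀ᶠ n : ℕ in atTop, (bF A n : ℝ) / n = 1 := by
    filter_upwards [eventually_ge_atTop 1] with n hn
    obtain ⟨u, hu⟩ := h n hn
    rw [bF_eq_self_of_Icc_subset hn hu, div_self (by positivity)]
  rw [ubd, limsup_congr hratio, limsup_const]

lemma three_mul_add_one_le_four_pow (i : ℕ) : 3 * i + 1 ≤ 4 ^ i := by
  induction i with
  | zero => simp
  | succ k ih => rw [pow_succ]; omega

lemma four_pow_add_self_lt_four_pow_succ (i : ℕ) : 4 ^ i + i < 4 ^ (i + 1) := by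
  have := three_mul_add_one_le_four_pow i
  rw [pow_succ]
  omega

def powFourBlocks : Set ℕ := ⋃ i ∈ Ici 1, Icc (4 ^ i) (4 ^ i + i - 1)

lemma mem_powFourBlocks {x : ℕ} :
    x ∈ powFourBlocks ↔ ∃ i, 1 ≤ i ∧ 4 ^ i ≤ x ∧ x < 4 ^ i + i := by
  simp only [powFourBlocks, mem_iUnion, mem_Icc, mem_Ici, exists_prop]
  refine exists_congr fun i => and_congr_right fun hi => and_congr_right fun _ => ?_
  have : 0 < 4 ^ i := by positivity
  omega

lemma Icc_subset_powFourBlocks {n : ℕ} (hn : 1 ≤ n) :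
    Icc (4 ^ n) (4 ^ n + n - 1) ⊆ powFourBlocks :=
  subset_biUnion_of_mem (u := fun i => Icc (4 ^ i) (4 ^ i + i - 1)) (mem_Ici.2 hn)

lemma notMem_powFourBlocks_of_gap {i x : ℕ} (h₁ : 4 ^ i + i ≤ x) (h₂ : x < 4 ^ (i + 1)) :
    x ∉ powFourBlocks := by
  rw [mem_powFourBlocks]
  rintro ⟨j, -, hjx, hxj⟩
  rcases le_or_gt j i with hji | hij
  · have := Nat.pow_le_pow_right (by norm_num : 0 < 4) hji
    omega
  · have := Nat.pow_le_pow_right (by norm_num : 0 < 4) hij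
    omega

lemma le_of_four_pow_le_of_lt_four_pow_add_self {i m x : ℕ} (hm : 4 ^ m ≤ x)
    (hx : x < 4 ^ i + i) : m ≤ i := by
  by_contra! him
  have := Nat.pow_le_pow_right (by norm_num : 0 < 4) him
  have := four_pow_add_self_lt_four_pow_succ i
  omega

lemma notMem_powFourBlocks_of_two_mul_eq_add {i b a : ℕ} {t : ℤ} (hi : t.natAbs < i)
    (hb₁ : 4 ^ i ≤ b) (hb₂ : b < 4 ^ i + i) (hab : 2 * (b : ℤ) = a + t) :
    a ∉ powFourBlocks := by
  have hpow := three_mul_add_one_le_four_pow i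
  refine notMem_powFourBlocks_of_gap (i := i) ?_ ?_
  · omega
  · rw [pow_succ]
    omega

theorem union_example_no_double (A : Set ℕ)
    (hA : A = ⋃ i ∈ Set.Ici 1, Set.Icc (4 ^ i) (4 ^ i + i - 1)) :
    ubd A = 1 ∧
    ∀ B : Set ℕ, B ⊆ A → B.Infinite → ∀ t : ℤ,
      ¬ ({x : ℤ | ∃ b ∈ B, x = 2 * (b : ℤ)} ⊆
          {x : ℤ | ∃ a ∈ A, x = (a : ℤ) + t}) := by
  obtain rfl : A = powFourBlocks := hA
  refine ⟨ubd_eq_one_of_forall_Icc_subset fun n hn => ⟨4 ^ n, Icc_subset_powFourBlocks hn⟩, ?_⟩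
  intro B hBA hB t hsub
  obtain ⟨b, hbB, hb⟩ := hB.exists_gt (4 ^ (t.natAbs + 1))
  obtain ⟨i, -, hib, hbi⟩ := mem_powFourBlocks.1 (hBA hbB)
  obtain ⟨a, ha, hab⟩ := hsub ⟨b, hbB, rfl⟩
  have hti : t.natAbs + 1 ≤ i := le_of_four_pow_le_of_lt_four_pow_add_self hb.le hbi
  exact notMem_powFourBlocks_of_two_mul_eq_add hti hib hbi hab ha
end

section
/- Let A = ⋃_{i=1}^∞ [4^i, 4^i + i − 1] and let t ∈ ℕ₀. There exists i₀ ∈ ℕ such that 4^i − i > t for all i ≥ i₀, and for every i ≥ i₀ and every b ∈ [4^i, 4^i + i − 1], the number 2b belongs neither to A + t nor to A − t. -/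
/-!
For `b` in the block `[4^i, 4^i + i - 1]`, the number `2b` lies strictly between the blocks:
every earlier block (and the block itself) ends below `2 * 4^i - t`, and the next block starts at
`4 * 4^i`, far above `2b + t`. Hence `2b` is at distance more than `t` from every element of `A`.
-/

lemma two_mul_lt_four_pow (i : ℕ) : 2 * i < 4 ^ i := by
  calc 2 * i < 2 ^ (2 * i) := Nat.lt_two_pow_self
    _ = 4 ^ i := by rw [pow_mul]; norm_num

lemma add_lt_four_pow {t i : ℕ} (hi : t ≤ i) : t + i < 4 ^ i := by
  have := two_mul_lt_four_pow i
  omega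

lemma add_lt_two_mul_or_two_mul_add_lt {t i j a b : ℕ} (ht : t + i < 4 ^ i)
    (hb : b ∈ Set.Icc (4 ^ i) (4 ^ i + i - 1)) (ha : a ∈ Set.Icc (4 ^ j) (4 ^ j + j - 1)) :
    a + t < 2 * b ∨ 2 * b + t < a := by
  obtain ⟨hb₁, hb₂⟩ := hb
  obtain ⟨ha₁, ha₂⟩ := ha
  rcases le_or_gt j i with hji | hij
  · have : 4 ^ j ≤ 4 ^ i := Nat.pow_le_pow_right (by norm_num) hji
    omega
  · have : 4 * 4 ^ i ≤ 4 ^ j := by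
      rw [← pow_succ']
      exact Nat.pow_le_pow_right (by norm_num) hij
    omega

theorem union_example_double_avoids (A : Set ℕ)
    (hA : A = ⋃ i ∈ Set.Ici 1, Set.Icc (4 ^ i) (4 ^ i + i - 1)) (t : ℕ) :
    ∃ i₀ : ℕ, 0 < i₀ ∧ (∀ i, i₀ ≤ i → (t : ℤ) < 4 ^ i - i) ∧
      ∀ i, i₀ ≤ i → ∀ b ∈ Set.Icc (4 ^ i) (4 ^ i + i - 1),
        2 * (b : ℤ) ∉ {x : ℤ | ∃ a ∈ A, x = (a : ℤ) + t} ∧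
        2 * (b : ℤ) ∉ {x : ℤ | ∃ a ∈ A, x = (a : ℤ) - t} := by
  refine ⟨t + 1, t.succ_pos, fun i hi => ?_, fun i hi b hb => ?_⟩
  · have : (t : ℤ) + i < 4 ^ i := by exact_mod_cast add_lt_four_pow (by omega : t ≤ i)
    linarith
  · have far : ∀ a ∈ A, a + t < 2 * b ∨ 2 * b + t < a := by
      intro a ha
      rw [hA] at ha
      simp only [Set.mem_iUnion] at ha
      obtain ⟨j, -, ha⟩ := ha
      exact add_lt_two_mul_or_two_mul_add_lt (add_lt_four_pow (by omega)) hb ha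
    constructor <;>
    · rintro ⟨a, ha, h⟩
      have := far a ha
      omega
end
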